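/- Suppose the matrices M_1,…,M_r satisfy conditions (H0), (H1), (H2) and (H3*). Then they satisfy condition (H3): for every nonzero p ∈ ℤ^r there exists a word w ∈ W which is not p-periodic. -/

import Mathlib

open Matrix

variable {r : ℕ} {A : Type*}

/-- The `j`-th standard basis vector of `ℤ^r`. -/
def evec (r : ℕ) (j : Fin r) : Fin r → ℤ := fun i => if i = j then 1 else 0

/-- `w` represents a word of shape `m` (only its values on `[0,m]` matter):
`m ≥ 0` and the transition matrices are respected on the box `[0,m]`. -/
def IsWord (M : Fin r → Matrix A A ℤ) (m : Fin r → ℤ) (w : (Fin r → ℤ) → A) : Prop :=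
  0 ≤ m ∧ ∀ (l : Fin r → ℤ) (j : Fin r), 0 ≤ l → l + evec r j ≤ m →
    M j (w (l + evec r j)) (w l) = 1

/-- Two representing functions agree on the box `[0,m]`; this is equality of
words of shape `m`. -/
def AgreeOn (m : Fin r → ℤ) (w w' : (Fin r → ℤ) → A) : Prop :=
  ∀ l : Fin r → ℤ, 0 ≤ l → l ≤ m → w l = w' l

/-- The restriction `w|[k,k+n]`, as a word based at `0`: `(restrictW k w) i = w (i + k)`. -/
def restrictW (k : Fin r → ℤ) (w : (Fin r → ℤ) → A) : (Fin r → ℤ) → A :=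
  fun i => w (i + k)

/-- `w` (a word of shape `m`) is `p`-periodic: the translate `τ_p w`, given by
`(τ_p w)(x) = w (x - p)`, agrees with `w` on `[0,m] ∩ [p,p+m]`. -/
def IsPeriodic (p m : Fin r → ℤ) (w : (Fin r → ℤ) → A) : Prop :=
  ∀ x : Fin r → ℤ, 0 ≤ x → x ≤ m → p ≤ x → x ≤ p + m → w (x - p) = w x

/-- Condition (H0): each `M j` is nonzero. -/
def H0 (M : Fin r → Matrix A A ℤ) : Prop := ∀ j, M j ≠ 0

/-- Condition (H1): unique products of words. -/
def H1 (M : Fin r → Matrix A A ℤ) : Prop :=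
  ∀ (m n : Fin r → ℤ) (u v : (Fin r → ℤ) → A),
    IsWord M m u → IsWord M n v → u m = v 0 →
      (∃ w, IsWord M (m + n) w ∧ AgreeOn m w u ∧ AgreeOn n (restrictW m w) v) ∧
      (∀ w w', IsWord M (m + n) w → AgreeOn m w u → AgreeOn n (restrictW m w) v →
        IsWord M (m + n) w' → AgreeOn m w' u → AgreeOn n (restrictW m w') v →
        AgreeOn (m + n) w w')

/-- Condition (H2): the directed graph on `A` with an edge `a → b` whenever
`M i b a = 1` for some `i` is irreducible. -/
def H2 (M : Fin r → Matrix A A ℤ) : Prop :=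
  ∀ a b : A, Relation.ReflTransGen (fun x y => ∃ i, M i y x = 1) a b

/-- Condition (H3): for each nonzero `p ∈ ℤ^r` there is a non-`p`-periodic word. -/
def H3 (M : Fin r → Matrix A A ℤ) : Prop :=
  ∀ p : Fin r → ℤ, p ≠ 0 → ∃ (m : Fin r → ℤ) (w : (Fin r → ℤ) → A),
    IsWord M m w ∧ ¬ IsPeriodic p m w

/-- Condition (H1a): the matrices commute. -/
def H1a [Fintype A] (M : Fin r → Matrix A A ℤ) : Prop :=
  ∀ i j, M i * M j = M j * M i

/-- Condition (H1b): for `i < j`, the entries of `M i * M j` lie in `{0,1}`. -/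
def H1b [Fintype A] (M : Fin r → Matrix A A ℤ) : Prop :=
  ∀ i j, i < j → ∀ a b : A, (M i * M j) b a = 0 ∨ (M i * M j) b a = 1

/-- Condition (H1c): for `i < j < k`, the entries of `M i * M j * M k` lie in `{0,1}`. -/
def H1c [Fintype A] (M : Fin r → Matrix A A ℤ) : Prop :=
  ∀ i j k, i < j → j < k → ∀ a b : A,
    (M i * M j * M k) b a = 0 ∨ (M i * M j * M k) b a = 1

/-- Condition (H3*). -/
def H3star (M : Fin r → Matrix A A ℤ) : Prop :=
  ∀ (j : Fin r) (m : Fin r → ℤ), m j = 0 → ∀ w : (Fin r → ℤ) → A, IsWord M m w →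
    ∃ u u', IsWord M (m + evec r j) u ∧ IsWord M (m + evec r j) u' ∧
      AgreeOn m u w ∧ AgreeOn m u' w ∧ u (evec r j) ≠ u' (evec r j)

/-- `x` represents the product word `uv` of `u ∈ W_m` and `v ∈ W_n`. -/
def IsProd (M : Fin r → Matrix A A ℤ) (m n : Fin r → ℤ)
    (u v x : (Fin r → ℤ) → A) : Prop :=
  IsWord M (m + n) x ∧ AgreeOn m x u ∧ AgreeOn n (restrictW m x) v

/-!
Write `p = p⁺ - p⁻` and assume `p j > 0` (otherwise replace `p` by `-p`). Take any word `B`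
of shape `p⁺ + p⁻ - e_j`; it contains the point `p⁻`, while `p⁺` lies in the layer directly
above `B` in direction `j`. Split `B` by (H1) at `p⁺ - e_j`: the second factor is a slab in
direction `j`, which (H3*) extends in two ways differing right above its origin. Gluing the
first factor back gives two extensions of `B` that agree at `p⁻ = p⁺ - p` but differ at `p⁺`,
so at most one of them is `p`-periodic.
-/

lemma evec_nonneg (j : Fin r) : (0 : Fin r → ℤ) ≤ evec r j := fun i => by
  simp only [Pi.zero_apply, evec]
  split_ifs <;> omega

section Words

variable {M : Fin r → Matrix A A ℤ}

lemma isWord_zero (w : (Fin r → ℤ) → A) : IsWord M 0 w := by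
  refine ⟨le_rfl, fun l j hl hle => absurd (hle j) ?_⟩
  have := hl j
  simp only [Pi.add_apply, Pi.zero_apply, evec, ↓reduceIte] at this ⊢
  omega

namespace IsWord

variable {m : Fin r → ℤ} {w : (Fin r → ℤ) → A}

lemma mono {n : Fin r → ℤ} (hw : IsWord M m w) (hn : 0 ≤ n) (hnm : n ≤ m) : IsWord M n w :=
  ⟨hn, fun l j hl hle => hw.2 l j hl (hle.trans hnm)⟩

lemma restrict {k n : Fin r → ℤ} (hw : IsWord M m w) (hk : 0 ≤ k) (hn : 0 ≤ n)
    (hkn : k + n ≤ m) : IsWord M n (restrictW k w) := by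
  refine ⟨hn, fun l j hl hle => ?_⟩
  have h := hw.2 (l + k) j (add_nonneg hl hk) <| calc
    l + k + evec r j = k + (l + evec r j) := by abel
    _ ≤ k + n := add_le_add le_rfl hle
    _ ≤ m := hkn
  rwa [add_right_comm l k] at h

/-- Replacing the part of `B` beyond `a` by an extension `v` of it yields an extension of `B`. -/
lemma exists_extend (h1 : H1 M) {B v : (Fin r → ℤ) → A} {a d : Fin r → ℤ}
    (hB : IsWord M m B) (ha : 0 ≤ a) (ham : a ≤ m) (hd : 0 ≤ d)
    (hv : IsWord M (m - a + d) v) (hvB : AgreeOn (m - a) v (restrictW a B)) :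
    ∃ W, IsWord M (m + d) W ∧ AgreeOn m W B ∧
      AgreeOn (m - a + d) (restrictW a W) v := by
  have hma : 0 ≤ m - a := sub_nonneg.2 ham
  have hBa : IsWord M a B := hB.mono ha ham
  have hjoin : B a = v 0 := by simpa [restrictW] using (hvB 0 le_rfl hma).symm
  obtain ⟨W, hW, hWB, hWv⟩ := (h1 a (m - a + d) B v hBa hv hjoin).1
  rw [show a + (m - a + d) = m + d by abel] at hW
  refine ⟨W, hW, ?_, hWv⟩
  have hsplit : a + (m - a) = m := add_sub_cancel a m
  -- both `W` and `B` are the product of `B|[0,a]` and `B|[a,m]`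
  have huniq := (h1 a (m - a) B (restrictW a B) hBa
    (hB.restrict ha hma hsplit.le) (by simp [restrictW])).2 W B
    (by rw [hsplit]; exact hW.mono hB.1 (le_add_of_nonneg_right hd)) hWB
    (fun l hl hle => (hWv l hl (le_add_of_le_of_nonneg hle hd)).trans (hvB l hl hle))
    (by rwa [hsplit]) (fun _ _ _ => rfl) (fun _ _ _ => rfl)
  rwa [hsplit] at huniq

lemma exists_branch (h1 : H1 M) (h3s : H3star M) {B : (Fin r → ℤ) → A} (hB : IsWord M m B)
    (j : Fin r) {c : Fin r → ℤ} (hc : 0 ≤ c) (hcm : c ≤ m) (hcj : c j = m j) :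
    ∃ W W', IsWord M (m + evec r j) W ∧ IsWord M (m + evec r j) W' ∧
      AgreeOn m W B ∧ AgreeOn m W' B ∧ W (c + evec r j) ≠ W' (c + evec r j) := by
  have hmc : 0 ≤ m - c := sub_nonneg.2 hcm
  obtain ⟨u, u', hu, hu', huB, hu'B, hne⟩ := h3s j (m - c) (by simp [hcj])
    (restrictW c B) (hB.restrict hc hmc (add_sub_cancel c m).le)
  obtain ⟨W, hW, hWB, hWu⟩ := hB.exists_extend h1 hc hcm (evec_nonneg j) hu huB
  obtain ⟨W', hW', hW'B, hW'u⟩ := hB.exists_extend h1 hc hcm (evec_nonneg j) hu' hu'B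
  refine ⟨W, W', hW, hW', hWB, hW'B, ?_⟩
  have hej : evec r j ≤ m - c + evec r j := le_add_of_nonneg_left hmc
  have hshift (V : (Fin r → ℤ) → A) : restrictW c V (evec r j) = V (c + evec r j) := by
    rw [restrictW, add_comm]
  rwa [← hshift W, ← hshift W', hWu _ (evec_nonneg j) hej, hW'u _ (evec_nonneg j) hej]

end IsWord

lemma exists_isWord [Nonempty A] (h1 : H1 M) (h3s : H3star M) {m : Fin r → ℤ} (hm : 0 ≤ m) :
    ∃ w, IsWord M m w := by
  obtain ⟨n, hn⟩ : ∃ n : ℕ, ∑ i, m i = n :=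
    ⟨_, (Int.toNat_of_nonneg (Finset.sum_nonneg fun i _ => hm i)).symm⟩
  induction n generalizing m with
  | zero =>
    have hm0 : m = 0 := funext fun i =>
      (Finset.sum_eq_zero_iff_of_nonneg fun i _ => hm i).1 hn i (Finset.mem_univ i)
    exact ⟨fun _ => Classical.arbitrary A, hm0 ▸ isWord_zero _⟩
  | succ n ih =>
    obtain ⟨j, hj⟩ : ∃ j, 0 < m j := by
      by_contra! hle
      have := Finset.sum_nonpos fun i (_ : i ∈ Finset.univ) => hle i
      omega
    have hm' : 0 ≤ m - evec r j := fun i => by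
      have := hm i
      simp only [Pi.sub_apply, Pi.zero_apply, evec] at this ⊢
      split_ifs with hij
      · subst hij; omega
      · omega
    have hsum : ∑ i, (m - evec r j) i = n := by
      simp [Finset.sum_sub_distrib, evec, hn]
    obtain ⟨w, hw⟩ := ih hm' hsum
    obtain ⟨W, -, hW, -⟩ := hw.exists_branch h1 h3s j hm' le_rfl rfl
    exact ⟨W, by rwa [sub_add_cancel] at hW⟩

lemma IsPeriodic.neg {p m : Fin r → ℤ} {w : (Fin r → ℤ) → A} (h : IsPeriodic p m w) :
    IsPeriodic (-p) m w := by
  intro x hx hxm hpx hxpm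
  have := h (x + p) (neg_le_iff_add_nonneg.1 hpx) ((add_comm x p).trans_le (le_neg_add_iff_add_le.1 hxpm))
    (le_add_of_nonneg_left hx) (by rw [add_comm p]; exact add_le_add_left hxm p)
  simpa using this.symm

lemma exists_not_isPeriodic_of_pos [Nonempty A] (h1 : H1 M) (h3s : H3star M)
    {p : Fin r → ℤ} {j : Fin r} (hpj : 0 < p j) :
    ∃ m w, IsWord M m w ∧ ¬ IsPeriodic p m w := by
  have hyj : p⁻ j = 0 := by simp [Pi.negPart_apply, hpj.le]
  have hex : evec r j ≤ p⁺ := fun i => by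
    simp only [evec, Pi.posPart_apply]
    split_ifs with hij
    · subst hij; exact (Int.add_one_le_of_lt hpj).trans (le_posPart _)
    · exact posPart_nonneg _
  have hc : 0 ≤ p⁺ - evec r j := sub_nonneg.2 hex
  have hm : 0 ≤ p⁺ + p⁻ - evec r j := by
    rw [add_sub_right_comm]; exact add_nonneg hc (negPart_nonneg p)
  obtain ⟨B, hB⟩ := exists_isWord h1 h3s hm
  obtain ⟨W, W', hW, hW', hWB, hW'B, hne⟩ := hB.exists_branch h1 h3s j hc
    (sub_le_sub_right (le_add_of_nonneg_right (negPart_nonneg p)) _) (by simp [hyj])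
  rw [sub_add_cancel] at hne hW hW'
  have hy : p⁻ ≤ p⁺ + p⁻ - evec r j := by
    rw [add_sub_right_comm]; exact le_add_of_nonneg_left hc
  have hxy : p⁺ - p = p⁻ := by rw [sub_eq_iff_eq_add', ← sub_eq_iff_eq_add, posPart_sub_negPart]
  have hper (V : (Fin r → ℤ) → A) (hV : IsPeriodic p (p⁺ + p⁻) V) : V p⁻ = V p⁺ := by
    have hx := hV p⁺ (posPart_nonneg p) (le_add_of_nonneg_right (negPart_nonneg p))
      (le_posPart p) <| calc
        p⁺ ≤ p⁺ + p⁺ := le_add_of_nonneg_left (posPart_nonneg p)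
        _ = p + (p⁺ + p⁻) := by rw [← hxy]; abel
    rwa [hxy] at hx
  by_cases hWp : IsPeriodic p (p⁺ + p⁻) W
  · refine ⟨_, W', hW', fun hW'p => hne ?_⟩
    rw [← hper W hWp, ← hper W' hW'p, hWB _ (negPart_nonneg p) hy, hW'B _ (negPart_nonneg p) hy]
  · exact ⟨_, W, hW, hWp⟩

end Words

theorem stmt_11_general [Nonempty A]
    (M : Fin r → Matrix A A ℤ)
    (h1 : H1 M) (h3s : H3star M) :
    H3 M := by
  intro p hp
  obtain ⟨j, hj⟩ := Function.ne_iff.1 hp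
  rcases hj.lt_or_gt with hneg | hpos
  · obtain ⟨m, w, hw, hnp⟩ := exists_not_isPeriodic_of_pos h1 h3s (p := -p) (j := j)
      (by simpa using hneg)
    exact ⟨m, w, hw, fun hper => hnp hper.neg⟩
  · exact exists_not_isPeriodic_of_pos h1 h3s hpos

/-- conditions (H0), (H1), (H2) and (H3*) imply condition (H3). -/
theorem stmt_11 [Fintype A] [Nonempty A] (hr : 0 < r)
    (M : Fin r → Matrix A A ℤ)
    (hM : ∀ j (a b : A), M j b a = 0 ∨ M j b a = 1)
    (h0 : H0 M) (h1 : H1 M) (h2 : H2 M) (h3s : H3star M) :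
    H3 M :=
  stmt_11_general M h1 h3s
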